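/- For priors G_h (supported on [0,h]) and Ĝ (supported on [0,ĥ]) with Poisson mixtures f_{G_h}, f_{Ĝ}, the truncated regret satisfies E_{G_h}[(θ̂_{Ĝ}(Y) − θ̂_{G_h}(Y))² 1{Y ≤ K−1}] ≤ (6(h² + ĥ²) + 24(h + ĥ)K) · H²(f_{Ĝ}, f_{G_h}). -/
import Mathlib


open MeasureTheory Real Finset

/-- Poisson density with mean `θ` at point `y`. -/
noncomputable def poissonPdf (θ : ℝ) (y : ℕ) : ℝ :=
  Real.exp (-θ) * θ ^ y / (Nat.factorial y)

/-- Poisson mixture density `f_Q`. -/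
noncomputable def mixturePdf (Q : Measure ℝ) (y : ℕ) : ℝ :=
  ∫ θ, poissonPdf θ y ∂Q

/-- Bayes estimator for prior `Q` in the Poisson model. -/
noncomputable def bayesEst (Q : Measure ℝ) (y : ℕ) : ℝ :=
  (y + 1 : ℝ) * mixturePdf Q (y + 1) / mixturePdf Q y

lemma poisson_meas (y : ℕ) : Measurable (fun θ : ℝ => poissonPdf θ y) := by
  unfold poissonPdf
  exact ((Real.measurable_exp.comp measurable_neg).mul (measurable_id.pow_const y)).div_const _

lemma poisson_nonneg {θ : ℝ} (hθ : 0 ≤ θ) (y : ℕ) : 0 ≤ poissonPdf θ y :=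
  div_nonneg (mul_nonneg (Real.exp_nonneg _) (pow_nonneg hθ y)) (Nat.cast_nonneg _)

lemma poisson_le {θ c : ℝ} (h0 : 0 ≤ θ) (h1 : θ ≤ c) (y : ℕ) :
    poissonPdf θ y ≤ c ^ y / Nat.factorial y := by
  unfold poissonPdf
  have hfac : (0:ℝ) < Nat.factorial y := by exact_mod_cast Nat.factorial_pos y
  rw [div_le_div_iff_of_pos_right hfac]
  calc Real.exp (-θ) * θ ^ y ≤ 1 * c ^ y := by
        apply mul_le_mul _ (pow_le_pow_left₀ h0 h1 y) (pow_nonneg h0 y) zero_le_one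
        exact Real.exp_le_one_iff.mpr (by linarith)
    _ = c ^ y := one_mul _

lemma integrable_poisson (Q : Measure ℝ) [IsProbabilityMeasure Q] {c : ℝ}
    (hQ : ∀ᵐ θ ∂Q, θ ∈ Set.Icc 0 c) (y : ℕ) :
    Integrable (fun θ => poissonPdf θ y) Q := by
  apply Integrable.mono' (integrable_const (c ^ y / Nat.factorial y))
    (poisson_meas y).aestronglyMeasurable
  filter_upwards [hQ] with θ hθ
  rw [Real.norm_eq_abs, abs_of_nonneg (poisson_nonneg hθ.1 y)]
  exact poisson_le hθ.1 hθ.2 y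

lemma mix_nonneg (Q : Measure ℝ) [IsProbabilityMeasure Q] {c : ℝ}
    (hQ : ∀ᵐ θ ∂Q, θ ∈ Set.Icc 0 c) (y : ℕ) : 0 ≤ mixturePdf Q y :=
  integral_nonneg_of_ae (by filter_upwards [hQ] with θ hθ; exact poisson_nonneg hθ.1 y)

lemma mix_le (Q : Measure ℝ) [IsProbabilityMeasure Q] {c : ℝ}
    (hQ : ∀ᵐ θ ∂Q, θ ∈ Set.Icc 0 c) (y : ℕ) :
    mixturePdf Q y ≤ c ^ y / Nat.factorial y := by
  have : mixturePdf Q y ≤ ∫ _θ, c ^ y / Nat.factorial y ∂Q := by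
    apply integral_mono_ae (integrable_poisson Q hQ y) (integrable_const _)
    filter_upwards [hQ] with θ hθ
    exact poisson_le hθ.1 hθ.2 y
  simpa [integral_const, measure_univ] using this

lemma poisson_step (θ : ℝ) (y : ℕ) :
    ((y:ℝ) + 1) * poissonPdf θ (y + 1) = θ * poissonPdf θ y := by
  unfold poissonPdf
  have hfac : ((Nat.factorial y : ℝ)) ≠ 0 := by
    exact_mod_cast Nat.factorial_ne_zero y
  have h1 : ((y:ℝ) + 1) ≠ 0 := by positivity
  rw [Nat.factorial_succ]
  push_cast
  field_simp
  ring

lemma mix_step (Q : Measure ℝ) [IsProbabilityMeasure Q] {c : ℝ}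
    (hQ : ∀ᵐ θ ∂Q, θ ∈ Set.Icc 0 c) (y : ℕ) :
    ((y:ℝ) + 1) * mixturePdf Q (y + 1) ≤ c * mixturePdf Q y := by
  have int1 : Integrable (fun θ => θ * poissonPdf θ y) Q := by
    have := (integrable_poisson Q hQ (y + 1)).const_mul ((y:ℝ) + 1)
    simpa only [poisson_step] using this
  have int2 : Integrable (fun θ => c * poissonPdf θ y) Q :=
    (integrable_poisson Q hQ y).const_mul c
  calc ((y:ℝ) + 1) * mixturePdf Q (y + 1)
      = ∫ θ, ((y:ℝ) + 1) * poissonPdf θ (y + 1) ∂Q := (integral_const_mul _ _).symm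
    _ = ∫ θ, θ * poissonPdf θ y ∂Q := by simp only [poisson_step]
    _ ≤ ∫ θ, c * poissonPdf θ y ∂Q := by
        apply integral_mono_ae int1 int2
        filter_upwards [hQ] with θ hθ
        exact mul_le_mul_of_nonneg_right hθ.2 (poisson_nonneg hθ.1 y)
    _ = c * mixturePdf Q y := integral_const_mul _ _

lemma sum3_sq (x y z X Y Z : ℝ) (hx : x ^ 2 ≤ X) (hy : y ^ 2 ≤ Y) (hz : z ^ 2 ≤ Z) :
    (x + y + z) ^ 2 ≤ 3 * (X + Y + Z) := by
  nlinarith [sq_nonneg (x - y), sq_nonneg (y - z), sq_nonneg (x - z)]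

set_option maxHeartbeats 1000000 in
lemma alg_main (h hh a b s t : ℝ) (ha : 0 < a) (hb : 0 < b) (hs : 0 ≤ s) (ht : 0 ≤ t)
    (hth : t ^ 2 ≤ h) (hsh : s ^ 2 ≤ hh) :
    (s ^ 2 - t ^ 2) ^ 2 * a ^ 2
      ≤ 6 * (h ^ 2 + hh ^ 2) * (b - a) ^ 2 + 6 * (h + hh) * (s * b - t * a) ^ 2 := by
  have hh0 : 0 ≤ hh := le_trans (sq_nonneg s) hsh
  have hh0' : 0 ≤ h := le_trans (sq_nonneg t) hth
  rcases le_total a b with hab | hab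
  · have hb2 : (0:ℝ) < b ^ 2 := by positivity
    have ha2b2 : a ^ 2 ≤ b ^ 2 := by nlinarith
    have e : (s ^ 2 - t ^ 2) * a
        = s ^ 2 * (a - b) + (s * b - t * a) * (s * b + t * a) / b + t ^ 2 * a * (a - b) / b := by
      field_simp
      ring
    have h1 : (s ^ 2 * (a - b)) ^ 2 ≤ hh ^ 2 * (b - a) ^ 2 := by
      nlinarith [mul_nonneg (mul_nonneg (sub_nonneg.2 hsh) (by positivity : (0:ℝ) ≤ hh + s ^ 2))
        (sq_nonneg (a - b))]
    have h2 : ((s * b - t * a) * (s * b + t * a) / b) ^ 2 ≤ 2 * (h + hh) * (s * b - t * a) ^ 2 := by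
      rw [div_pow, div_le_iff₀ hb2]
      have e1 : s ^ 2 * b ^ 2 ≤ hh * b ^ 2 := mul_le_mul_of_nonneg_right hsh (sq_nonneg b)
      have e2 : t ^ 2 * a ^ 2 ≤ h * a ^ 2 := mul_le_mul_of_nonneg_right hth (sq_nonneg a)
      have e3 : h * a ^ 2 ≤ h * b ^ 2 := mul_le_mul_of_nonneg_left ha2b2 hh0'
      have hsum : (s * b + t * a) ^ 2 ≤ 2 * (h + hh) * b ^ 2 := by
        nlinarith [sq_nonneg (s * b - t * a)]
      calc ((s * b - t * a) * (s * b + t * a)) ^ 2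
          = (s * b - t * a) ^ 2 * (s * b + t * a) ^ 2 := by ring
        _ ≤ (s * b - t * a) ^ 2 * (2 * (h + hh) * b ^ 2) :=
            mul_le_mul_of_nonneg_left hsum (sq_nonneg _)
        _ = 2 * (h + hh) * (s * b - t * a) ^ 2 * b ^ 2 := by ring
    have h3 : (t ^ 2 * a * (a - b) / b) ^ 2 ≤ h ^ 2 * (b - a) ^ 2 := by
      rw [div_pow, div_le_iff₀ hb2]
      have e4a : t ^ 2 * t ^ 2 ≤ h * h := mul_le_mul hth hth (sq_nonneg t) hh0'
      have e4 : t ^ 2 * t ^ 2 * a ^ 2 ≤ h * h * b ^ 2 :=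
        le_trans (mul_le_mul_of_nonneg_right e4a (sq_nonneg a))
          (mul_le_mul_of_nonneg_left ha2b2 (mul_nonneg hh0' hh0'))
      calc (t ^ 2 * a * (a - b)) ^ 2 = (t ^ 2 * t ^ 2 * a ^ 2) * (a - b) ^ 2 := by ring
        _ ≤ (h * h * b ^ 2) * (a - b) ^ 2 := mul_le_mul_of_nonneg_right e4 (sq_nonneg _)
        _ = h ^ 2 * (b - a) ^ 2 * b ^ 2 := by ring
    calc (s ^ 2 - t ^ 2) ^ 2 * a ^ 2 = ((s ^ 2 - t ^ 2) * a) ^ 2 := by ring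
      _ = (s ^ 2 * (a - b) + (s * b - t * a) * (s * b + t * a) / b
            + t ^ 2 * a * (a - b) / b) ^ 2 := by rw [e]
      _ ≤ 3 * (hh ^ 2 * (b - a) ^ 2 + 2 * (h + hh) * (s * b - t * a) ^ 2 + h ^ 2 * (b - a) ^ 2) :=
          sum3_sq _ _ _ _ _ _ h1 h2 h3
      _ ≤ 6 * (h ^ 2 + hh ^ 2) * (b - a) ^ 2 + 6 * (h + hh) * (s * b - t * a) ^ 2 := by
          nlinarith [mul_nonneg (by positivity : (0:ℝ) ≤ h ^ 2 + hh ^ 2) (sq_nonneg (b - a))]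
  · have ha2 : (0:ℝ) < a ^ 2 := by positivity
    have hb2a2 : b ^ 2 ≤ a ^ 2 := by nlinarith
    have e : (s ^ 2 - t ^ 2) * a
        = (s * b - t * a) * (s * b + t * a) / a + s ^ 2 * (a - b) + s ^ 2 * (a - b) * b / a := by
      field_simp
      ring
    have h1 : ((s * b - t * a) * (s * b + t * a) / a) ^ 2 ≤ 2 * (h + hh) * (s * b - t * a) ^ 2 := by
      rw [div_pow, div_le_iff₀ ha2]
      have e1 : s ^ 2 * b ^ 2 ≤ hh * b ^ 2 := mul_le_mul_of_nonneg_right hsh (sq_nonneg b)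
      have e2 : t ^ 2 * a ^ 2 ≤ h * a ^ 2 := mul_le_mul_of_nonneg_right hth (sq_nonneg a)
      have e3 : hh * b ^ 2 ≤ hh * a ^ 2 := mul_le_mul_of_nonneg_left hb2a2 hh0
      have hsum : (s * b + t * a) ^ 2 ≤ 2 * (h + hh) * a ^ 2 := by
        nlinarith [sq_nonneg (s * b - t * a)]
      calc ((s * b - t * a) * (s * b + t * a)) ^ 2
          = (s * b - t * a) ^ 2 * (s * b + t * a) ^ 2 := by ring
        _ ≤ (s * b - t * a) ^ 2 * (2 * (h + hh) * a ^ 2) :=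
            mul_le_mul_of_nonneg_left hsum (sq_nonneg _)
        _ = 2 * (h + hh) * (s * b - t * a) ^ 2 * a ^ 2 := by ring
    have h2 : (s ^ 2 * (a - b)) ^ 2 ≤ hh ^ 2 * (b - a) ^ 2 := by
      nlinarith [mul_nonneg (mul_nonneg (sub_nonneg.2 hsh) (by positivity : (0:ℝ) ≤ hh + s ^ 2))
        (sq_nonneg (a - b))]
    have h3 : (s ^ 2 * (a - b) * b / a) ^ 2 ≤ hh ^ 2 * (b - a) ^ 2 := by
      rw [div_pow, div_le_iff₀ ha2]
      have e4a : s ^ 2 * s ^ 2 ≤ hh * hh := mul_le_mul hsh hsh (sq_nonneg s) hh0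
      have e4 : s ^ 2 * s ^ 2 * b ^ 2 ≤ hh * hh * a ^ 2 :=
        le_trans (mul_le_mul_of_nonneg_right e4a (sq_nonneg b))
          (mul_le_mul_of_nonneg_left hb2a2 (mul_nonneg hh0 hh0))
      calc (s ^ 2 * (a - b) * b) ^ 2 = (s ^ 2 * s ^ 2 * b ^ 2) * (a - b) ^ 2 := by ring
        _ ≤ (hh * hh * a ^ 2) * (a - b) ^ 2 := mul_le_mul_of_nonneg_right e4 (sq_nonneg _)
        _ = hh ^ 2 * (b - a) ^ 2 * a ^ 2 := by ring
    calc (s ^ 2 - t ^ 2) ^ 2 * a ^ 2 = ((s ^ 2 - t ^ 2) * a) ^ 2 := by ring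
      _ = ((s * b - t * a) * (s * b + t * a) / a + s ^ 2 * (a - b)
            + s ^ 2 * (a - b) * b / a) ^ 2 := by rw [e]
      _ ≤ 3 * (2 * (h + hh) * (s * b - t * a) ^ 2 + hh ^ 2 * (b - a) ^ 2
            + hh ^ 2 * (b - a) ^ 2) := sum3_sq _ _ _ _ _ _ h1 h2 h3
      _ ≤ 6 * (h ^ 2 + hh ^ 2) * (b - a) ^ 2 + 6 * (h + hh) * (s * b - t * a) ^ 2 := by
          nlinarith [mul_nonneg (sq_nonneg h) (sq_nonneg (b - a))]

lemma bridge (h hh n f0 f1 g0 g1 : ℝ) (hn : 1 ≤ n) (hf0 : 0 < f0) (hg0 : 0 < g0)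
    (hf1 : 0 ≤ f1) (hg1 : 0 ≤ g1) (hstepf : n * f1 ≤ h * f0) (hstepg : n * g1 ≤ hh * g0) :
    (n * g1 / g0 - n * f1 / f0) ^ 2 * f0
      ≤ 6 * (h ^ 2 + hh ^ 2) * (Real.sqrt g0 - Real.sqrt f0) ^ 2
        + 6 * (h + hh) * n * (Real.sqrt g1 - Real.sqrt f1) ^ 2 := by
  have hn0 : (0:ℝ) ≤ n := by linarith
  set a := Real.sqrt f0 with hadef
  set b := Real.sqrt g0 with hbdef
  have ha : 0 < a := Real.sqrt_pos.2 hf0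
  have hb : 0 < b := Real.sqrt_pos.2 hg0
  have ha2 : a ^ 2 = f0 := Real.sq_sqrt hf0.le
  have hb2 : b ^ 2 = g0 := Real.sq_sqrt hg0.le
  set t := Real.sqrt (n * f1) / a with htdef
  set s := Real.sqrt (n * g1) / b with hsdef
  have ht : 0 ≤ t := div_nonneg (Real.sqrt_nonneg _) ha.le
  have hs : 0 ≤ s := div_nonneg (Real.sqrt_nonneg _) hb.le
  have ht2 : t ^ 2 = n * f1 / f0 := by
    rw [htdef, div_pow, Real.sq_sqrt (mul_nonneg hn0 hf1), ha2]
  have hs2 : s ^ 2 = n * g1 / g0 := by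
    rw [hsdef, div_pow, Real.sq_sqrt (mul_nonneg hn0 hg1), hb2]
  have hth : t ^ 2 ≤ h := by
    rw [ht2, div_le_iff₀ hf0]; linarith [hstepf]
  have hsh : s ^ 2 ≤ hh := by
    rw [hs2, div_le_iff₀ hg0]; linarith [hstepg]
  have hta : t * a = Real.sqrt n * Real.sqrt f1 := by
    rw [htdef, div_mul_cancel₀ _ ha.ne', Real.sqrt_mul hn0]
  have hsb : s * b = Real.sqrt n * Real.sqrt g1 := by
    rw [hsdef, div_mul_cancel₀ _ hb.ne', Real.sqrt_mul hn0]
  have hcross : (s * b - t * a) ^ 2 = n * (Real.sqrt g1 - Real.sqrt f1) ^ 2 := by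
    rw [hsb, hta]
    have : (Real.sqrt n * Real.sqrt g1 - Real.sqrt n * Real.sqrt f1) ^ 2
        = Real.sqrt n ^ 2 * (Real.sqrt g1 - Real.sqrt f1) ^ 2 := by ring
    rw [this, Real.sq_sqrt hn0]
  have main := alg_main h hh a b s t ha hb hs ht hth hsh
  rw [hcross, hs2, ht2, ha2] at main
  calc (n * g1 / g0 - n * f1 / f0) ^ 2 * f0
      ≤ 6 * (h ^ 2 + hh ^ 2) * (b - a) ^ 2
        + 6 * (h + hh) * (n * (Real.sqrt g1 - Real.sqrt f1) ^ 2) := main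
    _ = 6 * (h ^ 2 + hh ^ 2) * (Real.sqrt g0 - Real.sqrt f0) ^ 2
        + 6 * (h + hh) * n * (Real.sqrt g1 - Real.sqrt f1) ^ 2 := by
        rw [hadef, hbdef]; ring

/-- for priors `G_h` on `[0,h]` and `Ĝ` on `[0,ĥ]`, the truncated regret
satisfies
`E_{G_h}[(θ̂_Ĝ(Y) − θ̂_{G_h}(Y))² 1{Y ≤ K−1}] ≤ (6(h²+ĥ²) + 24(h+ĥ)K)·H²(f_Ĝ, f_{G_h})`. -/
theorem truncated_regret_hellinger_bound (h hhat : ℝ) (hh : 0 ≤ h) (hhh : 0 ≤ hhat)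
    (K : ℕ) (hK : 1 ≤ K)
    (Gh : Measure ℝ) [IsProbabilityMeasure Gh] (hGh : ∀ᵐ θ ∂Gh, θ ∈ Set.Icc 0 h)
    (Ghat : Measure ℝ) [IsProbabilityMeasure Ghat]
    (hGhat : ∀ᵐ θ ∂Ghat, θ ∈ Set.Icc 0 hhat)
    (hpos : ∀ y : ℕ, y ≤ K → 0 < mixturePdf Gh y ∧ 0 < mixturePdf Ghat y) :
    ∑ y ∈ Finset.range K, (bayesEst Ghat y - bayesEst Gh y) ^ 2 * mixturePdf Gh y
      ≤ (6 * (h ^ 2 + hhat ^ 2) + 24 * (h + hhat) * K) *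
        ∑' y : ℕ, (Real.sqrt (mixturePdf Ghat y) - Real.sqrt (mixturePdf Gh y)) ^ 2 := by
  set δ : ℕ → ℝ := fun y => (Real.sqrt (mixturePdf Ghat y) - Real.sqrt (mixturePdf Gh y)) ^ 2
    with hδ
  have hFnn : ∀ y, 0 ≤ mixturePdf Gh y := fun y => mix_nonneg Gh hGh y
  have hGnn : ∀ y, 0 ≤ mixturePdf Ghat y := fun y => mix_nonneg Ghat hGhat y
  have sumF : Summable (fun y => mixturePdf Gh y) :=
    Summable.of_nonneg_of_le hFnn (fun y => mix_le Gh hGh y) (Real.summable_pow_div_factorial h)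
  have sumG : Summable (fun y => mixturePdf Ghat y) :=
    Summable.of_nonneg_of_le hGnn (fun y => mix_le Ghat hGhat y)
      (Real.summable_pow_div_factorial hhat)
  have sumδ : Summable δ := by
    apply Summable.of_nonneg_of_le (fun y => sq_nonneg _)
      (fun y => ?_) (sumG.add sumF)
    have e1 := Real.sq_sqrt (hGnn y)
    have e2 := Real.sq_sqrt (hFnn y)
    have e3 : 0 ≤ Real.sqrt (mixturePdf Ghat y) * Real.sqrt (mixturePdf Gh y) :=
      mul_nonneg (Real.sqrt_nonneg _) (Real.sqrt_nonneg _)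
    show (Real.sqrt (mixturePdf Ghat y) - Real.sqrt (mixturePdf Gh y)) ^ 2
      ≤ mixturePdf Ghat y + mixturePdf Gh y
    nlinarith
  have Hnn : 0 ≤ ∑' y, δ y := tsum_nonneg fun y => sq_nonneg _
  have hper : ∀ y ∈ Finset.range K,
      (bayesEst Ghat y - bayesEst Gh y) ^ 2 * mixturePdf Gh y
        ≤ 6 * (h ^ 2 + hhat ^ 2) * δ y + 6 * (h + hhat) * K * δ (y + 1) := by
    intro y hy
    have hyK : y < K := Finset.mem_range.1 hy
    obtain ⟨hf0, hg0⟩ := hpos y hyK.le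
    obtain ⟨hf1, hg1⟩ := hpos (y + 1) hyK
    have stepf := mix_step Gh hGh y
    have stepg := mix_step Ghat hGhat y
    have hn1 : (1:ℝ) ≤ (y:ℝ) + 1 := by
      have : (0:ℝ) ≤ (y:ℝ) := Nat.cast_nonneg y
      linarith
    have key := bridge h hhat ((y:ℝ) + 1) (mixturePdf Gh y) (mixturePdf Gh (y + 1))
      (mixturePdf Ghat y) (mixturePdf Ghat (y + 1)) hn1 hf0 hg0 hf1.le hg1.le stepf stepg
    have hbe : bayesEst Ghat y - bayesEst Gh y
        = ((y:ℝ) + 1) * mixturePdf Ghat (y + 1) / mixturePdf Ghat y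
          - ((y:ℝ) + 1) * mixturePdf Gh (y + 1) / mixturePdf Gh y := by
      unfold bayesEst; push_cast; ring
    rw [hbe]
    refine key.trans ?_
    show _ ≤ 6 * (h ^ 2 + hhat ^ 2) *
        ((Real.sqrt (mixturePdf Ghat y) - Real.sqrt (mixturePdf Gh y)) ^ 2)
      + 6 * (h + hhat) * (K:ℝ) *
        ((Real.sqrt (mixturePdf Ghat (y + 1)) - Real.sqrt (mixturePdf Gh (y + 1))) ^ 2)
    have hyKr : (y:ℝ) + 1 ≤ (K:ℝ) := by exact_mod_cast hyK
    have hsq : (0:ℝ) ≤ (Real.sqrt (mixturePdf Ghat (y + 1))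
        - Real.sqrt (mixturePdf Gh (y + 1))) ^ 2 := sq_nonneg _
    have hmono : 6 * (h + hhat) * ((y:ℝ) + 1) ≤ 6 * (h + hhat) * (K:ℝ) :=
      mul_le_mul_of_nonneg_left hyKr (by linarith)
    linarith [mul_le_mul_of_nonneg_right hmono hsq]
  have S1 : ∑ y ∈ Finset.range K, δ y ≤ ∑' y, δ y :=
    Summable.sum_le_tsum _ (fun i _ => sq_nonneg _) sumδ
  have S2 : ∑ y ∈ Finset.range K, δ (y + 1) ≤ ∑' y, δ y := by
    have sumδ' : Summable (fun y => δ (y + 1)) := by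
      have := sumδ.comp_injective Nat.succ_injective
      exact this
    have t1 : ∑ y ∈ Finset.range K, δ (y + 1) ≤ ∑' y, δ (y + 1) :=
      Summable.sum_le_tsum _ (fun i _ => sq_nonneg _) sumδ'
    have t2 : ∑' y, δ y = δ 0 + ∑' y, δ (y + 1) := Summable.tsum_eq_zero_add sumδ
    have t3 : 0 ≤ δ 0 := sq_nonneg _
    linarith
  have c1nn : (0:ℝ) ≤ 6 * (h ^ 2 + hhat ^ 2) := by positivity
  have c2nn : (0:ℝ) ≤ 6 * (h + hhat) * K := by positivity
  calc ∑ y ∈ Finset.range K, (bayesEst Ghat y - bayesEst Gh y) ^ 2 * mixturePdf Gh y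
      ≤ ∑ y ∈ Finset.range K,
          (6 * (h ^ 2 + hhat ^ 2) * δ y + 6 * (h + hhat) * K * δ (y + 1)) :=
        Finset.sum_le_sum hper
    _ = 6 * (h ^ 2 + hhat ^ 2) * ∑ y ∈ Finset.range K, δ y
        + 6 * (h + hhat) * K * ∑ y ∈ Finset.range K, δ (y + 1) := by
        rw [Finset.sum_add_distrib, Finset.mul_sum, Finset.mul_sum]
    _ ≤ 6 * (h ^ 2 + hhat ^ 2) * ∑' y, δ y + 6 * (h + hhat) * K * ∑' y, δ y := by
        gcongr
    _ ≤ (6 * (h ^ 2 + hhat ^ 2) + 24 * (h + hhat) * K) * ∑' y, δ y := by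
        nlinarith [mul_nonneg c2nn Hnn]
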